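/- Let f : Set X → Set X be monotone and suppose f lies below the companion t of b, i.e., f S ⊆ t S for every S : Set X. Then f is b-sound: gfp (b ∘ f) ⊆ gfp b. -/
import Mathlib


variable {X : Type*}

/-- The greatest fixed point of a monotone function on sets: union of all post-fixed points. -/
def gfp (h : Set X → Set X) : Set X := ⋃₀ {S | S ⊆ h S}

/-- `f` progresses to `g` with respect to `b`. -/
def Progresses (b f g : Set X → Set X) : Prop := ∀ S, f (b S) ⊆ b (g S)

/-- `f` is `b`-compatible: `f` progresses to itself. -/
def Compatible (b f : Set X → Set X) : Prop := Progresses b f f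

/-- The companion of `b`: pointwise join of all monotone `b`-compatible functions. -/
def companion (b : Set X → Set X) (S : Set X) : Set X :=
  ⋃₀ {T | ∃ f : Set X → Set X, Monotone f ∧ Compatible b f ∧ T = f S}

lemma le_companion {b : Set X → Set X} {g : Set X → Set X}
    (hm : Monotone g) (hc : Compatible b g) (S : Set X) : g S ⊆ companion b S :=
  Set.subset_sUnion_of_mem ⟨g, hm, hc, rfl⟩

lemma companion_mono (b : Set X → Set X) : Monotone (companion b) := by
  intro S S' h x hx
  obtain ⟨T, ⟨g, hm, hc, rfl⟩, hxT⟩ := hx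
  exact ⟨g S', ⟨g, hm, hc, rfl⟩, hm h hxT⟩

lemma companion_compatible {b : Set X → Set X} (hb : Monotone b) :
    Compatible b (companion b) := by
  rintro S x ⟨T, ⟨g, hm, hc, rfl⟩, hxT⟩
  exact hb (le_companion hm hc S) (hc S hxT)

lemma companion_idem {b : Set X → Set X} (hb : Monotone b) (S : Set X) :
    companion b (companion b S) ⊆ companion b S := by
  refine le_companion ((companion_mono b).comp (companion_mono b))
    (fun T => ?_) S
  calc companion b (companion b (b T))
      ⊆ companion b (b (companion b T)) :=
        companion_mono b (companion_compatible hb T)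
    _ ⊆ b (companion b (companion b T)) := companion_compatible hb _

lemma gfp_postfixed {h : Set X → Set X} (hm : Monotone h) : gfp h ⊆ h (gfp h) := by
  rintro x ⟨S, hS, hxS⟩
  exact hm (Set.subset_sUnion_of_mem hS) (hS hxS)

theorem below_companion_sound {X : Type*} (b f : Set X → Set X)
    (hb : Monotone b) (hf : Monotone f)
    (hle : ∀ S : Set X, f S ⊆ companion b S) :
    gfp (b ∘ f) ⊆ gfp b := by
  set G := gfp (b ∘ f) with hG
  have hGpost : G ⊆ b (f G) := gfp_postfixed (hb.comp hf)
  have hGt : G ⊆ b (companion b G) := hGpost.trans (hb (hle G))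
  have htG : companion b G ⊆ b (companion b G) := by
    calc companion b G ⊆ companion b (b (companion b G)) := companion_mono b hGt
      _ ⊆ b (companion b (companion b G)) := companion_compatible hb _
      _ ⊆ b (companion b G) := hb (companion_idem hb G)
  have h1 : companion b G ⊆ gfp b := Set.subset_sUnion_of_mem htG
  have hid : G ⊆ companion b G :=
    le_companion (b := b) monotone_id (fun S => subset_rfl) G
  exact hid.trans h1
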